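/- arXiv:2502.03439 — 2 statements merged into one kernel-verified Lean document; each statement's English description precedes it below -/
import Mathlib

section
/- If the compatibility condition h ∘ T_σ^μ = T_σ^{h_♯μ} holds σ-a.e. for measurable maps h, then for two maps h₁, h₂ satisfying it with respect to the same μ, the LOT distance between h₁_♯μ and h₂_♯μ equals ‖h₁ ∘ T_σ^μ − h₂ ∘ T_σ^μ‖_{L²(σ)} = ‖h₁ − h₂‖_{L²(μ)}. -/
open MeasureTheory

theorem integral_norm_sub_sq_comp_of_map_eq {α β E : Type*} [MeasurableSpace α]
    [MeasurableSpace β] [NormedAddCommGroup E] [MeasurableSpace E] [BorelSpace E]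
    [SecondCountableTopology E] {σ : Measure α} {μ : Measure β} {T : α → β} {h₁ h₂ : β → E}
    (hT : Measurable T) (hh₁ : Measurable h₁) (hh₂ : Measurable h₂) (hpush : σ.map T = μ) :
    ∫ x, ‖h₁ (T x) - h₂ (T x)‖ ^ 2 ∂σ = ∫ y, ‖h₁ y - h₂ y‖ ^ 2 ∂μ := by
  rw [← hpush]
  exact (integral_map hT.aemeasurable
    ((hh₁.sub hh₂).norm.pow_const 2).aestronglyMeasurable).symm

theorem lot_dist_of_compatible_general {d : ℕ}
    (σ μ : Measure (EuclideanSpace ℝ (Fin d)))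
    (T T1 T2 h₁ h₂ : EuclideanSpace ℝ (Fin d) → EuclideanSpace ℝ (Fin d))
    (hT : Measurable T) (hh₁ : Measurable h₁) (hh₂ : Measurable h₂)
    (hpush : σ.map T = μ)
    (hcompat1 : T1 =ᵐ[σ] fun x => h₁ (T x))
    (hcompat2 : T2 =ᵐ[σ] fun x => h₂ (T x)) :
    Real.sqrt (∫ x, ‖T1 x - T2 x‖ ^ 2 ∂σ) =
        Real.sqrt (∫ x, ‖h₁ (T x) - h₂ (T x)‖ ^ 2 ∂σ) ∧
      Real.sqrt (∫ x, ‖h₁ (T x) - h₂ (T x)‖ ^ 2 ∂σ) =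
        Real.sqrt (∫ y, ‖h₁ y - h₂ y‖ ^ 2 ∂μ) := by
  have hcompat : (fun x => ‖T1 x - T2 x‖ ^ 2) =ᵐ[σ] fun x => ‖h₁ (T x) - h₂ (T x)‖ ^ 2 := by
    filter_upwards [hcompat1, hcompat2] with x h1 h2
    rw [h1, h2]
  exact ⟨congrArg Real.sqrt (integral_congr_ae hcompat),
    congrArg Real.sqrt (integral_norm_sub_sq_comp_of_map_eq hT hh₁ hh₂ hpush)⟩

/-- If the compatibility condition `hᵢ ∘ T_σ^μ = T_σ^{(hᵢ)_♯μ}` holds `σ`-a.e. for two maps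
`h₁, h₂`, then the LOT distance between `(h₁)_♯μ` and `(h₂)_♯μ` equals
`‖h₁ ∘ T_σ^μ − h₂ ∘ T_σ^μ‖_{L²(σ)} = ‖h₁ − h₂‖_{L²(μ)}`. -/
theorem lot_dist_of_compatible {d : ℕ}
    (σ μ : Measure (EuclideanSpace ℝ (Fin d)))
    [IsProbabilityMeasure σ] [IsProbabilityMeasure μ]
    (T T1 T2 h₁ h₂ : EuclideanSpace ℝ (Fin d) → EuclideanSpace ℝ (Fin d))
    (hT : Measurable T) (hh₁ : Measurable h₁) (hh₂ : Measurable h₂)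
    (hpush : σ.map T = μ)
    (hpush1 : σ.map T1 = μ.map h₁) (hpush2 : σ.map T2 = μ.map h₂)
    (hcompat1 : T1 =ᵐ[σ] fun x => h₁ (T x))
    (hcompat2 : T2 =ᵐ[σ] fun x => h₂ (T x)) :
    Real.sqrt (∫ x, ‖T1 x - T2 x‖ ^ 2 ∂σ) =
        Real.sqrt (∫ x, ‖h₁ (T x) - h₂ (T x)‖ ^ 2 ∂σ) ∧
      Real.sqrt (∫ x, ‖h₁ (T x) - h₂ (T x)‖ ^ 2 ∂σ) =
        Real.sqrt (∫ y, ‖h₁ y - h₂ y‖ ^ 2 ∂μ) :=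
  lot_dist_of_compatible_general σ μ T T1 T2 h₁ h₂ hT hh₁ hh₂ hpush hcompat1 hcompat2
end

section
/- If compatibility holds for h₁ and h₂ up to ε, i.e., ‖hᵢ ∘ T_σ^μ − T_σ^{(hᵢ)_♯μ}‖_{L²(σ)} < ε for i = 1,2, then |W_{2,σ}^{LOT}((h₁)_♯μ, (h₂)_♯μ) − ‖h₁ − h₂‖_{L²(μ)}| < 2ε. -/
open MeasureTheory

section Aux
variable {α : Type*} {m : MeasurableSpace α} {σ : Measure α}
  {H : Type*} [NormedAddCommGroup H]

lemma eLpNorm_two_eq_sqrt' {f : α → H} (hf : MemLp f 2 σ) :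
    eLpNorm f 2 σ = ENNReal.ofReal (Real.sqrt (∫ x, ‖f x‖ ^ 2 ∂σ)) := by
  rw [hf.eLpNorm_eq_integral_rpow_norm two_ne_zero ENNReal.ofNat_ne_top]
  congr 1
  rw [Real.sqrt_eq_rpow]
  norm_num

lemma sqrt_L2_add_le {f g : α → H} (hf : MemLp f 2 σ) (hg : MemLp g 2 σ) :
    Real.sqrt (∫ x, ‖f x + g x‖ ^ 2 ∂σ) ≤
      Real.sqrt (∫ x, ‖f x‖ ^ 2 ∂σ) + Real.sqrt (∫ x, ‖g x‖ ^ 2 ∂σ) := by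
  have h := eLpNorm_add_le hf.aestronglyMeasurable hg.aestronglyMeasurable one_le_two
  rw [eLpNorm_two_eq_sqrt' (hf.add hg), eLpNorm_two_eq_sqrt' hf, eLpNorm_two_eq_sqrt' hg,
    ← ENNReal.ofReal_add (Real.sqrt_nonneg _) (Real.sqrt_nonneg _)] at h
  exact (ENNReal.ofReal_le_ofReal_iff (by positivity)).1 h
end Aux

/-- If the compatibility condition holds up to `ε` for `h₁` and `h₂`, then the LOT distance
between `(h₁)_♯μ` and `(h₂)_♯μ` differs from `‖h₁ − h₂‖_{L²(μ)}` by less than `2ε`. -/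
theorem lot_dist_eps_compatible {d : ℕ}
    (σ μ : Measure (EuclideanSpace ℝ (Fin d)))
    [IsProbabilityMeasure σ] [IsProbabilityMeasure μ]
    (ε : ℝ)
    (T T1 T2 h₁ h₂ : EuclideanSpace ℝ (Fin d) → EuclideanSpace ℝ (Fin d))
    (hT : Measurable T) (hh₁ : Measurable h₁) (hh₂ : Measurable h₂)
    (hpush : σ.map T = μ)
    (hpush1 : σ.map T1 = μ.map h₁) (hpush2 : σ.map T2 = μ.map h₂)
    (hL2T1 : MemLp T1 2 σ) (hL2T2 : MemLp T2 2 σ)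
    (hL2h1 : MemLp (fun x => h₁ (T x)) 2 σ) (hL2h2 : MemLp (fun x => h₂ (T x)) 2 σ)
    (hcompat1 : Real.sqrt (∫ x, ‖h₁ (T x) - T1 x‖ ^ 2 ∂σ) < ε)
    (hcompat2 : Real.sqrt (∫ x, ‖h₂ (T x) - T2 x‖ ^ 2 ∂σ) < ε) :
    |Real.sqrt (∫ x, ‖T1 x - T2 x‖ ^ 2 ∂σ) -
        Real.sqrt (∫ y, ‖h₁ y - h₂ y‖ ^ 2 ∂μ)| < 2 * ε := by
  -- rewrite the μ-integral as a σ-integral via the pushforward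
  have hmap : ∫ y, ‖h₁ y - h₂ y‖ ^ 2 ∂μ = ∫ x, ‖h₁ (T x) - h₂ (T x)‖ ^ 2 ∂σ := by
    rw [← hpush, integral_map hT.aemeasurable]
    exact (((hh₁.sub hh₂).norm.pow_const 2).aestronglyMeasurable)
  rw [hmap]
  set a := Real.sqrt (∫ x, ‖T1 x - T2 x‖ ^ 2 ∂σ) with ha
  set b := Real.sqrt (∫ x, ‖h₁ (T x) - h₂ (T x)‖ ^ 2 ∂σ) with hb
  have hf1 : MemLp (fun x => h₁ (T x) - T1 x) 2 σ := hL2h1.sub hL2T1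
  have hf2 : MemLp (fun x => h₂ (T x) - T2 x) 2 σ := hL2h2.sub hL2T2
  have hD : MemLp (fun x => h₁ (T x) - h₂ (T x)) 2 σ := hL2h1.sub hL2h2
  have hu : MemLp (fun x => T1 x - T2 x) 2 σ := hL2T1.sub hL2T2
  -- a ≤ b + ε + ε
  have h1 : a ≤ b + Real.sqrt (∫ x, ‖h₁ (T x) - T1 x‖ ^ 2 ∂σ)
      + Real.sqrt (∫ x, ‖h₂ (T x) - T2 x‖ ^ 2 ∂σ) := by
    have e1 : (fun x => T1 x - T2 x) =
        fun x => ((h₁ (T x) - h₂ (T x)) + -(h₁ (T x) - T1 x)) + (h₂ (T x) - T2 x) := by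
      funext x; abel
    calc a = Real.sqrt (∫ x, ‖((h₁ (T x) - h₂ (T x)) + -(h₁ (T x) - T1 x)) + (h₂ (T x) - T2 x)‖ ^ 2 ∂σ) := by
            rw [ha]
            exact congrArg Real.sqrt (integral_congr_ae (Filter.Eventually.of_forall fun x => by
              simp only [show T1 x - T2 x = (h₁ (T x) - h₂ (T x)) + -(h₁ (T x) - T1 x) + (h₂ (T x) - T2 x) from by abel]))
      _ ≤ Real.sqrt (∫ x, ‖(h₁ (T x) - h₂ (T x)) + -(h₁ (T x) - T1 x)‖ ^ 2 ∂σ)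
            + Real.sqrt (∫ x, ‖h₂ (T x) - T2 x‖ ^ 2 ∂σ) :=
            sqrt_L2_add_le (hD.add hf1.neg) hf2
      _ ≤ (b + Real.sqrt (∫ x, ‖-(h₁ (T x) - T1 x)‖ ^ 2 ∂σ))
            + Real.sqrt (∫ x, ‖h₂ (T x) - T2 x‖ ^ 2 ∂σ) := by
            gcongr; exact sqrt_L2_add_le hD hf1.neg
      _ = b + Real.sqrt (∫ x, ‖h₁ (T x) - T1 x‖ ^ 2 ∂σ)
            + Real.sqrt (∫ x, ‖h₂ (T x) - T2 x‖ ^ 2 ∂σ) := by simp [norm_sub_rev, add_assoc]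
  have h2 : b ≤ a + Real.sqrt (∫ x, ‖h₁ (T x) - T1 x‖ ^ 2 ∂σ)
      + Real.sqrt (∫ x, ‖h₂ (T x) - T2 x‖ ^ 2 ∂σ) := by
    have e2 : (fun x => h₁ (T x) - h₂ (T x)) =
        fun x => ((T1 x - T2 x) + (h₁ (T x) - T1 x)) + -(h₂ (T x) - T2 x) := by
      funext x; abel
    calc b = Real.sqrt (∫ x, ‖((T1 x - T2 x) + (h₁ (T x) - T1 x)) + -(h₂ (T x) - T2 x)‖ ^ 2 ∂σ) := by
            rw [hb]
            exact congrArg Real.sqrt (integral_congr_ae (Filter.Eventually.of_forall fun x => by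
              simp only [show h₁ (T x) - h₂ (T x) = (T1 x - T2 x) + (h₁ (T x) - T1 x) + -(h₂ (T x) - T2 x) from by abel]))
      _ ≤ Real.sqrt (∫ x, ‖(T1 x - T2 x) + (h₁ (T x) - T1 x)‖ ^ 2 ∂σ)
            + Real.sqrt (∫ x, ‖-(h₂ (T x) - T2 x)‖ ^ 2 ∂σ) :=
            sqrt_L2_add_le (hu.add hf1) hf2.neg
      _ ≤ (a + Real.sqrt (∫ x, ‖h₁ (T x) - T1 x‖ ^ 2 ∂σ))
            + Real.sqrt (∫ x, ‖-(h₂ (T x) - T2 x)‖ ^ 2 ∂σ) := by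
            gcongr; exact sqrt_L2_add_le hu hf1
      _ = a + Real.sqrt (∫ x, ‖h₁ (T x) - T1 x‖ ^ 2 ∂σ)
            + Real.sqrt (∫ x, ‖h₂ (T x) - T2 x‖ ^ 2 ∂σ) := by simp [norm_sub_rev]
  rw [abs_sub_lt_iff]
  constructor <;> linarith
end
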